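/- arXiv:2411.16062 — 3 statements merged into one kernel-verified Lean document; each statement's English description precedes it below -/
import Mathlib

section
/- The limit C = lim_{k→∞} x_k / p^k exists, is strictly positive, and equals x_0 · ∏_{j=0}^∞ (1 − x_j), where the infinite product converges to a nonzero value. -/
/-!
Dividing the recurrence by `p ^ (k + 1)` gives `x (k + 1) / p ^ (k + 1) = (x k / p ^ k) * (1 - x k)`,
so `x k / p ^ k` is `x 0` times the `k`-th partial product of `∏ (1 - x j)`. Since `x k ≤ x 0 * p ^ k`,
the factors `1 - x j ∈ (0, 1)` differ from `1` by a summable amount, so the product converges to a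
positive limit.
-/

open Finset

lemma Real.multipliable_one_sub_of_summable {ι : Type*} {f : ι → ℝ} (hf : Summable f) :
    Multipliable fun i ↦ 1 - f i := by
  simpa only [sub_eq_add_neg] using Real.multipliable_one_add_of_summable hf.neg

lemma Real.tprod_one_sub_pos {ι : Type*} {f : ι → ℝ} (hlt : ∀ i, f i < 1) (hf : Summable f) :
    0 < ∏' i, (1 - f i) := by
  have hne : ∏' i, (1 - f i) ≠ 0 := by
    simpa only [sub_eq_add_neg] using tprod_one_add_ne_zero_of_summable (f := fun i ↦ -f i)
      (fun i ↦ by linarith [hlt i]) (by simpa only [norm_neg] using hf.norm)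
  exact (tprod_nonneg fun i ↦ by linarith [hlt i]).lt_of_ne' hne

section Logistic

variable {p : ℝ} {x : ℕ → ℝ} (hrec : ∀ k, x (k + 1) = p * x k * (1 - x k))
include hrec

lemma logistic_div_pow_eq_mul_prod (hp : p ≠ 0) (k : ℕ) :
    x k / p ^ k = x 0 * ∏ j ∈ range k, (1 - x j) := by
  induction k with
  | zero => simp
  | succ k ih =>
    rw [prod_range_succ, ← mul_assoc, ← ih, hrec, pow_succ]
    field_simp

lemma logistic_mem_Ioo (hp0 : 0 < p) (hp4 : p < 4) (hx : x 0 ∈ Set.Ioo 0 1) (k : ℕ) :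
    x k ∈ Set.Ioo 0 1 := by
  induction k with
  | zero => exact hx
  | succ k ih =>
    obtain ⟨hk0, hk1⟩ := ih
    rw [hrec]
    constructor
    · exact mul_pos (mul_pos hp0 hk0) (by linarith)
    · nlinarith [sq_nonneg (x k - 1 / 2)]

lemma logistic_le_mul_pow (hp : 0 ≤ p) (k : ℕ) : x k ≤ x 0 * p ^ k := by
  induction k with
  | zero => simp
  | succ k ih =>
    calc x (k + 1) = p * x k - p * x k ^ 2 := by rw [hrec]; ring
      _ ≤ p * x k := by nlinarith [sq_nonneg (x k)]
      _ ≤ p * (x 0 * p ^ k) := mul_le_mul_of_nonneg_left ih hp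
      _ = x 0 * p ^ (k + 1) := by ring

end Logistic

/-- For the logistic recurrence with `0 < p < 1` and `x_0 ∈ (0,1)`,
the limit `C = lim x_k / p^k` exists, is strictly positive, and equals
`x_0 * ∏_{j=0}^∞ (1 - x_j)`, the infinite product converging to a nonzero value. -/
theorem stmt4 (p : ℝ) (hp0 : 0 < p) (hp1 : p < 1)
    (x : ℕ → ℝ) (hx0 : 0 < x 0) (hx1 : x 0 < 1)
    (hrec : ∀ k : ℕ, x (k + 1) = p * x k * (1 - x k)) :
    ∃ C : ℝ, 0 < C ∧
      Filter.Tendsto (fun k : ℕ => x k / p ^ k) Filter.atTop (nhds C) ∧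
      Multipliable (fun j : ℕ => 1 - x j) ∧
      (∏' j : ℕ, (1 - x j)) ≠ 0 ∧
      C = x 0 * ∏' j : ℕ, (1 - x j) := by
  have hmem := logistic_mem_Ioo hrec hp0 (by linarith) ⟨hx0, hx1⟩
  have hsum : Summable x :=
    ((summable_geometric_of_lt_one hp0.le hp1).mul_left (x 0)).of_nonneg_of_le
      (fun k ↦ (hmem k).1.le) (logistic_le_mul_pow hrec hp0.le)
  have hmult := Real.multipliable_one_sub_of_summable hsum
  have hpos := Real.tprod_one_sub_pos (fun k ↦ (hmem k).2) hsum
  refine ⟨_, mul_pos hx0 hpos, ?_, hmult, hpos.ne', rfl⟩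
  simpa only [logistic_div_pow_eq_mul_prod hrec hp0.ne'] using
    hmult.hasProd.tendsto_prod_nat.const_mul (x 0)
end

section
/- The series ∑_{j=0}^∞ x_j converges, and the limit C = lim_{k→∞} x_k / p^k exists, is strictly positive, and equals x_0 · ∏_{j=0}^∞ (1 + x_j), where the infinite product converges to a finite nonzero value. -/
/-!
Since `x₀ < (1 - p)/p` means `q := p (1 + x₀) < 1`, induction gives `0 < x_k ≤ x₀ qᵏ`, so `∑ x_j`
converges, and with it `∏ (1 + x_j) = exp (∑ log (1 + x_j)) > 0`. Unfolding the recurrence,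
`x_k / pᵏ = x₀ ∏_{j<k} (1 + x_j)`, whose limit is `x₀ ∏' (1 + x_j)`.
-/

open Filter Finset

section LogisticTypeRecurrence

variable {p : ℝ} {x : ℕ → ℝ}

theorem pos_of_rec (hp : 0 < p) (hx0 : 0 < x 0)
    (hrec : ∀ k, x (k + 1) = p * x k * (1 + x k)) (k : ℕ) : 0 < x k := by
  induction k with
  | zero => exact hx0
  | succ n ih => rw [hrec n]; positivity

theorem le_geometric_of_rec (hp : 0 < p) (hx0 : 0 < x 0) (hq : p * (1 + x 0) ≤ 1)
    (hrec : ∀ k, x (k + 1) = p * x k * (1 + x k)) (k : ℕ) :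
    x k ≤ x 0 * (p * (1 + x 0)) ^ k := by
  induction k with
  | zero => simp
  | succ n ih =>
    have hxn : 0 < x n := pos_of_rec hp hx0 hrec n
    have hxn_le : x n ≤ x 0 :=
      ih.trans (mul_le_of_le_one_right hx0.le (pow_le_one₀ (by positivity) hq))
    calc x (n + 1) = p * (1 + x n) * x n := by rw [hrec n]; ring
      _ ≤ p * (1 + x 0) * (x 0 * (p * (1 + x 0)) ^ n) := by gcongr
      _ = x 0 * (p * (1 + x 0)) ^ (n + 1) := by ring

theorem summable_of_rec (hp : 0 < p) (hx0 : 0 < x 0) (hq : p * (1 + x 0) < 1)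
    (hrec : ∀ k, x (k + 1) = p * x k * (1 + x k)) : Summable x :=
  (summable_geometric_of_lt_one (by positivity) hq |>.mul_left (x 0)).of_nonneg_of_le
    (fun k => (pos_of_rec hp hx0 hrec k).le) (le_geometric_of_rec hp hx0 hq.le hrec)

theorem div_pow_eq_mul_prod_of_rec (hp : p ≠ 0)
    (hrec : ∀ k, x (k + 1) = p * x k * (1 + x k)) (k : ℕ) :
    x k / p ^ k = x 0 * ∏ j ∈ range k, (1 + x j) := by
  induction k with
  | zero => simp
  | succ n ih =>
    rw [prod_range_succ, ← mul_assoc, ← ih, hrec n, pow_succ]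
    field_simp

end LogisticTypeRecurrence

theorem stmt11_general (p : ℝ) (hp0 : 0 < p)
    (x : ℕ → ℝ) (hx0 : 0 < x 0) (hx0' : x 0 < (1 - p) / p)
    (hrec : ∀ k : ℕ, x (k + 1) = p * x k * (1 + x k)) :
    Summable x ∧
    ∃ C : ℝ, 0 < C ∧
      Filter.Tendsto (fun k : ℕ => x k / p ^ k) Filter.atTop (nhds C) ∧
      Multipliable (fun j : ℕ => 1 + x j) ∧
      (∏' j : ℕ, (1 + x j)) ≠ 0 ∧
      C = x 0 * ∏' j : ℕ, (1 + x j) := by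
  have hq : p * (1 + x 0) < 1 := by
    have := (lt_div_iff₀ hp0).mp hx0'
    linarith
  have hsum : Summable x := summable_of_rec hp0 hx0 hq hrec
  have hmul : Multipliable (fun j => 1 + x j) := Real.multipliable_one_add_of_summable hsum
  have hprod_pos : 0 < ∏' j, (1 + x j) := by
    rw [← Real.rexp_tsum_eq_tprod (fun j => by linarith [pos_of_rec hp0 hx0 hrec j])
      (Real.summable_log_one_add_of_summable hsum)]
    exact Real.exp_pos _
  refine ⟨hsum, _, mul_pos hx0 hprod_pos, ?_, hmul, hprod_pos.ne', rfl⟩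
  simp_rw [div_pow_eq_mul_prod_of_rec hp0.ne' hrec]
  exact hmul.hasProd.tendsto_prod_nat.const_mul (x 0)

/-- For the recurrence `x_k = p * x_{k-1} * (1 + x_{k-1})` with `0 < p < 1`
and `x_0 ∈ (0, (1-p)/p)`, the series `∑ x_j` converges and the limit
`C = lim x_k / p^k` exists, is strictly positive, and equals
`x_0 * ∏_{j=0}^∞ (1 + x_j)`, the infinite product converging to a finite
nonzero value. -/
theorem stmt11 (p : ℝ) (hp0 : 0 < p) (hp1 : p < 1)
    (x : ℕ → ℝ) (hx0 : 0 < x 0) (hx0' : x 0 < (1 - p) / p)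
    (hrec : ∀ k : ℕ, x (k + 1) = p * x k * (1 + x k)) :
    Summable x ∧
    ∃ C : ℝ, 0 < C ∧
      Filter.Tendsto (fun k : ℕ => x k / p ^ k) Filter.atTop (nhds C) ∧
      Multipliable (fun j : ℕ => 1 + x j) ∧
      (∏' j : ℕ, (1 + x j)) ≠ 0 ∧
      C = x 0 * ∏' j : ℕ, (1 + x j) :=
  stmt11_general p hp0 x hx0 hx0' hrec
end

section
/- The sequence x_k converges to 0 as k → ∞. -/
/-!
On `(0, x 0]` the map `y ↦ p y (1 + y)` is bounded by `r y` with `r = p (1 + x 0)`, and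
`x 0 < (1 - p) / p` says exactly `r < 1`. So the orbit never leaves `(0, x 0]`, and it is
dominated by the geometric sequence `r ^ k * x 0`.
-/

open Filter Topology Set

theorem tendsto_zero_of_le_geometric {u : ℕ → ℝ} {r : ℝ} (hr0 : 0 ≤ r) (hr1 : r < 1)
    (hu : ∀ k, 0 ≤ u k) (hstep : ∀ k, u (k + 1) ≤ r * u k) :
    Tendsto u atTop (𝓝 0) := by
  have hgeom : Tendsto (fun k ↦ r ^ k * u 0) atTop (𝓝 0) := by
    simpa using (tendsto_pow_atTop_nhds_zero_of_lt_one hr0 hr1).mul_const (u 0)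
  exact squeeze_zero hu (fun k ↦ le_geom hr0 k fun j _ ↦ hstep j) hgeom

theorem mul_mul_one_add_le {p y c : ℝ} (hp : 0 ≤ p) (hy : 0 ≤ y) (hyc : y ≤ c) :
    p * y * (1 + y) ≤ p * (1 + c) * y := by
  nlinarith [mul_nonneg hp hy]

theorem mul_one_add_lt_one_of_lt_div {p c : ℝ} (hp : 0 < p) (hc : c < (1 - p) / p) :
    p * (1 + c) < 1 := by
  rw [lt_div_iff₀ hp] at hc
  linarith

theorem stmt12_general (p : ℝ) (hp0 : 0 < p)
    (x : ℕ → ℝ) (hx0 : 0 < x 0) (hx0' : x 0 < (1 - p) / p)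
    (hrec : ∀ k : ℕ, x (k + 1) = p * x k * (1 + x k)) :
    Filter.Tendsto x Filter.atTop (nhds 0) := by
  set r := p * (1 + x 0)
  have hr1 : r < 1 := mul_one_add_lt_one_of_lt_div hp0 hx0'
  have hr0 : 0 ≤ r := by positivity
  have hstep : ∀ k, 0 < x k → x k ≤ x 0 → x (k + 1) ≤ r * x k := fun k hpos hle ↦
    hrec k ▸ mul_mul_one_add_le hp0.le hpos.le hle
  have horbit : ∀ k, x k ∈ Ioc 0 (x 0) := by
    intro k
    induction k with
    | zero => exact ⟨hx0, le_rfl⟩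
    | succ k ih =>
      obtain ⟨hpos, hle⟩ := ih
      refine ⟨hrec k ▸ by positivity, ?_⟩
      nlinarith [hstep k hpos hle]
  exact tendsto_zero_of_le_geometric hr0 hr1 (fun k ↦ (horbit k).1.le)
    fun k ↦ hstep k (horbit k).1 (horbit k).2

/-- For the recurrence `x_k = p * x_{k-1} * (1 + x_{k-1})` with `0 < p < 1`
and `x_0 ∈ (0, (1-p)/p)`, the sequence `x_k` converges to `0`. -/
theorem stmt12 (p : ℝ) (hp0 : 0 < p) (hp1 : p < 1)
    (x : ℕ → ℝ) (hx0 : 0 < x 0) (hx0' : x 0 < (1 - p) / p)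
    (hrec : ∀ k : ℕ, x (k + 1) = p * x k * (1 + x k)) :
    Filter.Tendsto x Filter.atTop (nhds 0) :=
  stmt12_general p hp0 x hx0 hx0' hrec
end
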